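/- If α is a normal helix with unit axis V orthogonal to W = cos θ·N + sin θ·B, then V = λT + μ(sin θ·N − cos θ·B) where μ = exp(tan θ·∫τ) and λ = −sec θ·(τ/κ)·exp(tan θ·∫τ) (up to a constant multiple). -/

import Mathlib

open Real Set
noncomputable section
open Topology Filter intervalIntegral

/-- Euclidean dot product on `Fin 3 → ℝ`. -/
def dot3 (u v : Fin 3 → ℝ) : ℝ := ∑ i, u i * v i

lemma dot3_add_left (u v w : Fin 3 → ℝ) : dot3 (u + v) w = dot3 u w + dot3 v w := by
  simp [dot3, add_mul, Finset.sum_add_distrib]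

lemma dot3_sub_left (u v w : Fin 3 → ℝ) : dot3 (u - v) w = dot3 u w - dot3 v w := by
  simp [dot3, sub_mul, Finset.sum_sub_distrib]

lemma dot3_smul_left (c : ℝ) (u v : Fin 3 → ℝ) : dot3 (c • u) v = c * dot3 u v := by
  simp [dot3, Finset.mul_sum, mul_assoc]

lemma dot3_comm (u v : Fin 3 → ℝ) : dot3 u v = dot3 v u := by
  simp [dot3, mul_comm]

lemma dot3_zero_left (v : Fin 3 → ℝ) : dot3 0 v = 0 := by simp [dot3]

lemma hasDerivAt_dot3_const {f : ℝ → Fin 3 → ℝ} {f' : Fin 3 → ℝ} {s : ℝ} (V : Fin 3 → ℝ)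
    (hf : HasDerivAt f f' s) :
    HasDerivAt (fun u => dot3 (f u) V) (dot3 f' V) s := by
  have h1 := hasDerivAt_pi.mp hf
  exact HasDerivAt.fun_sum (fun i _ => (h1 i).mul_const (V i))
open Real Set intervalIntegral Topology Filter

lemma intHasDeriv {h : ℝ → ℝ} (hh : Continuous h) (a t : ℝ) :
    HasDerivAt (fun u => ∫ x in a..u, h x) (h t) t :=
  integral_hasDerivAt_right (hh.intervalIntegrable _ _)
    hh.aestronglyMeasurable.stronglyMeasurableAtFilter hh.continuousAt

lemma intHasDerivLeft {h : ℝ → ℝ} (hh : Continuous h) (b t : ℝ) :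
    HasDerivAt (fun u => ∫ x in u..b, h x) (-h t) t :=
  integral_hasDerivAt_left (hh.intervalIntegrable _ _)
    hh.aestronglyMeasurable.stronglyMeasurableAtFilter hh.continuousAt

lemma ode_zero_forward (g h : ℝ → ℝ) (hg : Differentiable ℝ g) (hh : Continuous h)
    (hode : ∀ s, g s ≠ 0 → deriv g s = h s * g s)
    (a b : ℝ) (hab : a ≤ b) (ha : g a = 0) : g b = 0 := by
  rcases eq_or_lt_of_le hab with rfl | hab
  · exact ha
  by_contra hgb
  set S : Set ℝ := Icc a b ∩ g ⁻¹' {0} with hS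
  have hSne : S.Nonempty := ⟨a, ⟨le_refl a, le_of_lt hab⟩, ha⟩
  have hSbdd : BddAbove S := ⟨b, fun x hx => hx.1.2⟩
  have hSclosed : IsClosed S :=
    isClosed_Icc.inter (isClosed_singleton.preimage hg.continuous)
  set c := sSup S with hc
  have hcS : c ∈ S := hSclosed.csSup_mem hSne hSbdd
  have hgc : g c = 0 := hcS.2
  have hcb : c < b := lt_of_le_of_ne hcS.1.2 (fun h => hgb (h ▸ hgc))
  have key : ∀ d ∈ Ioc c b, g d ≠ 0 := by
    intro d hd hgd
    have : d ∈ S := ⟨⟨le_trans hcS.1.1 (le_of_lt hd.1), hd.2⟩, hgd⟩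
    exact absurd (le_csSup hSbdd this) (not_le_of_gt hd.1)
  set Φ : ℝ → ℝ := fun t => g t * Real.exp (∫ u in t..b, h u) with hΦ
  have hΦderiv : ∀ t, HasDerivAt Φ
      (deriv g t * Real.exp (∫ u in t..b, h u) +
        g t * (Real.exp (∫ u in t..b, h u) * -h t)) t := by
    intro t
    exact ((hg t).hasDerivAt).mul ((intHasDerivLeft hh b t).exp)
  have hΦcont : Continuous Φ :=
    Differentiable.continuous (fun t => (hΦderiv t).differentiableAt)
  have hΦzero : ∀ t ∈ Ioc c b, HasDerivAt Φ 0 t := by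
    intro t ht
    have := hΦderiv t
    rw [hode t (key t ht)] at this
    convert this using 1
    ring
  have hconst : ∀ d ∈ Ioc c b, Φ d = Φ b := by
    intro d hd
    have h1 : ∀ x ∈ Icc d b, Φ x = Φ d := by
      apply constant_of_has_deriv_right_zero (hΦcont.continuousOn)
      intro x hx
      exact (hΦzero x ⟨lt_of_lt_of_le hd.1 hx.1, le_of_lt hx.2⟩).hasDerivWithinAt
    exact (h1 b ⟨hd.2, le_refl b⟩).symm
  have hne : (𝓝[>] c).NeBot := nhdsGT_neBot c
  have hIoc : Ioc c b ∈ 𝓝[>] c := by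
    rw [mem_nhdsWithin]
    exact ⟨Iio b, isOpen_Iio, hcb, fun x hx => ⟨hx.2, le_of_lt hx.1⟩⟩
  have htend1 : Filter.Tendsto Φ (𝓝[>] c) (𝓝 (Φ c)) :=
    (hΦcont.continuousAt).tendsto.mono_left nhdsWithin_le_nhds
  have htend2 : Filter.Tendsto Φ (𝓝[>] c) (𝓝 (Φ b)) := by
    apply Filter.Tendsto.congr' _ tendsto_const_nhds
    filter_upwards [hIoc] with d hd
    exact (hconst d hd).symm
  have : Φ c = Φ b := tendsto_nhds_unique htend1 htend2
  rw [hΦ] at this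
  simp only [hgc, zero_mul, intervalIntegral.integral_same, Real.exp_zero, mul_one] at this
  exact hgb this.symm

lemma ode_zero (g h : ℝ → ℝ) (hg : Differentiable ℝ g) (hh : Continuous h)
    (hode : ∀ s, g s ≠ 0 → deriv g s = h s * g s)
    (a b : ℝ) (ha : g a = 0) : g b = 0 := by
  rcases le_total a b with hab | hba
  · exact ode_zero_forward g h hg hh hode a b hab ha
  · have hg' : Differentiable ℝ (fun s => g (-s)) := hg.comp differentiable_neg
    have hode' : ∀ s, g (-s) ≠ 0 → deriv (fun s => g (-s)) s = (-h (-s)) * g (-s) := by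
      intro s hs
      rw [deriv_comp_neg, hode (-s) hs]
      ring
    have := ode_zero_forward (fun s => g (-s)) (fun s => -h (-s)) hg'
      ((hh.comp continuous_neg).neg) hode' (-a) (-b) (neg_le_neg hba) (by simpa using ha)
    simpa using this

lemma ode_solution (g h : ℝ → ℝ) (hg : Differentiable ℝ g) (hh : Continuous h)
    (hode : ∀ s, g s ≠ 0 → deriv g s = h s * g s) (s₀ : ℝ) :
    ∀ s, g s = g s₀ * Real.exp (∫ t in s₀..s, h t) := by
  by_cases hz : ∃ a, g a = 0
  · obtain ⟨a, ha⟩ := hz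
    intro s
    rw [ode_zero g h hg hh hode a s ha, ode_zero g h hg hh hode a s₀ ha, zero_mul]
  · push_neg at hz
    set F : ℝ → ℝ := fun s => g s * Real.exp (-∫ t in s₀..s, h t) with hF
    have hFd : ∀ s, HasDerivAt F 0 s := by
      intro s
      have h1 : HasDerivAt (fun u => Real.exp (-∫ t in s₀..u, h t))
          (Real.exp (-∫ t in s₀..s, h t) * -h s) s := ((intHasDeriv hh s₀ s).neg).exp
      have h2 : HasDerivAt (fun u => g u * Real.exp (-∫ t in s₀..u, h t)) _ s :=
        ((hg s).hasDerivAt).mul h1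
      rw [hode s (hz s)] at h2
      convert h2 using 1
      ring
    have hFc : ∀ s, F s = F s₀ :=
      fun s => is_const_of_deriv_eq_zero (fun t => (hFd t).differentiableAt)
        (fun t => (hFd t).deriv) s s₀
    intro s
    have := hFc s
    rw [hF] at this
    simp only [intervalIntegral.integral_same, neg_zero, Real.exp_zero, mul_one] at this
    have h3 := congrArg (fun x => x * Real.exp (∫ t in s₀..s, h t)) this
    simp only [mul_assoc, ← Real.exp_add, neg_add_cancel, Real.exp_zero, mul_one] at h3
    exact h3

/-- For a normal helix with unit axis `V` orthogonal to `W = cos θ•N + sin θ•B`, writing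
`V = λ•T + μ•(sin θ•N − cos θ•B)` with `λ, μ` differentiable, one has (up to a constant
multiple) `μ = exp(tan θ·∫τ)` and `λ = −sec θ·(τ/κ)·exp(tan θ·∫τ)`. -/
theorem normal_helix_axis_coefficients
    (T N B : ℝ → (Fin 3 → ℝ)) (κ τ lam mu : ℝ → ℝ) (θ s₀ : ℝ) (V : Fin 3 → ℝ)
    (hθ : θ ∈ Ioo (-(π/2)) (π/2))
    (hκ : ∀ s, 0 < κ s) (hτc : Continuous τ)
    (hT : ∀ s, deriv T s = κ s • N s)
    (hN : ∀ s, deriv N s = -κ s • T s + τ s • B s)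
    (hB : ∀ s, deriv B s = -τ s • N s)
    (hTT : ∀ s, dot3 (T s) (T s) = 1) (hNN : ∀ s, dot3 (N s) (N s) = 1)
    (hBB : ∀ s, dot3 (B s) (B s) = 1)
    (hTN : ∀ s, dot3 (T s) (N s) = 0) (hTB : ∀ s, dot3 (T s) (B s) = 0)
    (hNB : ∀ s, dot3 (N s) (B s) = 0)
    (hVunit : dot3 V V = 1)
    (hW : ∀ s, dot3 (Real.cos θ • N s + Real.sin θ • B s) V = 0)
    (hlam : Differentiable ℝ lam) (hmu : Differentiable ℝ mu)
    (hV : ∀ s, V = lam s • T s + mu s • (Real.sin θ • N s - Real.cos θ • B s)) :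
    ∃ C : ℝ, ∀ s,
      mu s = C * Real.exp (Real.tan θ * ∫ t in s₀..s, τ t) ∧
      lam s = -(1 / Real.cos θ) * (τ s / κ s) *
        (C * Real.exp (Real.tan θ * ∫ t in s₀..s, τ t)) := by
  have hcos : 0 < Real.cos θ := Real.cos_pos_of_mem_Ioo hθ
  have hcos' : Real.cos θ ≠ 0 := ne_of_gt hcos
  have hNT : ∀ s, dot3 (N s) (T s) = 0 := fun s => (dot3_comm _ _).trans (hTN s)
  have hBT : ∀ s, dot3 (B s) (T s) = 0 := fun s => (dot3_comm _ _).trans (hTB s)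
  have hBN : ∀ s, dot3 (B s) (N s) = 0 := fun s => (dot3_comm _ _).trans (hNB s)
  -- differentiability of T and N
  have hTd : ∀ s, DifferentiableAt ℝ T s := by
    intro s; by_contra hcon
    have h0 := deriv_zero_of_not_differentiableAt hcon
    rw [hT s] at h0
    have := congrArg (fun w => dot3 w (N s)) h0
    simp only [dot3_smul_left, dot3_zero_left, hNN s, mul_one] at this
    exact (hκ s).ne' this
  have hNd : ∀ s, DifferentiableAt ℝ N s := by
    intro s; by_contra hcon
    have h0 := deriv_zero_of_not_differentiableAt hcon
    rw [hN s] at h0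
    have := congrArg (fun w => dot3 w (T s)) h0
    simp only [dot3_add_left, dot3_smul_left, dot3_zero_left, hTT s, hBT s,
      mul_one, mul_zero, add_zero] at this
    have : κ s = 0 := by linarith
    exact (hκ s).ne' this
  -- dot products of frame with V
  have dotTV : ∀ s, dot3 (T s) V = lam s := by
    intro s
    rw [dot3_comm, hV s, dot3_add_left, dot3_smul_left, dot3_smul_left, dot3_sub_left,
      dot3_smul_left, dot3_smul_left, hTT s, hNT s, hBT s]
    ring
  have dotNV : ∀ s, dot3 (N s) V = mu s * Real.sin θ := by
    intro s
    rw [dot3_comm, hV s, dot3_add_left, dot3_smul_left, dot3_smul_left, dot3_sub_left,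
      dot3_smul_left, dot3_smul_left, hTN s, hNN s, hBN s]
    ring
  have dotBV : ∀ s, dot3 (B s) V = mu s * -Real.cos θ := by
    intro s
    rw [dot3_comm, hV s, dot3_add_left, dot3_smul_left, dot3_smul_left, dot3_sub_left,
      dot3_smul_left, dot3_smul_left, hTB s, hNB s, hBB s]
    ring
  -- equation (A)
  have eqA : ∀ s, Real.sin θ * deriv mu s + κ s * lam s + τ s * mu s * Real.cos θ = 0 := by
    intro s
    have h1 : HasDerivAt (fun u => dot3 (N u) V) (dot3 (deriv N s) V) s :=
      hasDerivAt_dot3_const V (hNd s).hasDerivAt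
    rw [show (fun u => dot3 (N u) V) = fun u => mu u * Real.sin θ from funext dotNV] at h1
    have h3 : HasDerivAt (fun u => mu u * Real.sin θ) (deriv mu s * Real.sin θ) s :=
      ((hmu s).hasDerivAt).mul_const _
    have h4 := h3.unique h1
    rw [hN s, dot3_add_left, dot3_smul_left, dot3_smul_left, dotTV s, dotBV s] at h4
    nlinarith [h4]
  -- equation (B)
  have eqB : ∀ s, mu s ≠ 0 → deriv mu s * Real.cos θ = τ s * mu s * Real.sin θ := by
    intro s hmus
    have hBloc : ∀ u, mu u ≠ 0 → B u =
        (mu u * Real.cos θ)⁻¹ • (lam u • T u + (mu u * Real.sin θ) • N u - V) := by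
      intro u hu
      have h1 : (mu u * Real.cos θ) • B u = lam u • T u + (mu u * Real.sin θ) • N u - V := by
        rw [hV u]
        module
      rw [← h1, smul_smul, inv_mul_cancel₀ (mul_ne_zero hu hcos'), one_smul]
    have hBdiff : DifferentiableAt ℝ B s := by
      have hev : B =ᶠ[𝓝 s]
          (fun u => (mu u * Real.cos θ)⁻¹ • (lam u • T u + (mu u * Real.sin θ) • N u - V)) := by
        have h2 : ∀ᶠ u in 𝓝 s, mu u ≠ 0 := (hmu.continuous.continuousAt).eventually_ne hmus
        filter_upwards [h2] with u hu using hBloc u hu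
      rw [hev.differentiableAt_iff]
      apply DifferentiableAt.fun_smul
      · exact ((hmu s).mul_const _).inv (mul_ne_zero hmus hcos')
      · exact (((hlam s).smul (hTd s)).add (((hmu s).mul_const _).smul (hNd s))).sub_const V
    have h1 : HasDerivAt (fun u => dot3 (B u) V) (dot3 (deriv B s) V) s :=
      hasDerivAt_dot3_const V hBdiff.hasDerivAt
    rw [show (fun u => dot3 (B u) V) = fun u => mu u * -Real.cos θ from funext dotBV] at h1
    have h3 : HasDerivAt (fun u => mu u * -Real.cos θ) (deriv mu s * -Real.cos θ) s :=
      ((hmu s).hasDerivAt).mul_const _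
    have h4 := h3.unique h1
    rw [hB s, dot3_smul_left, dotNV s] at h4
    nlinarith [h4]
  -- the ODE for mu
  have hode : ∀ s, mu s ≠ 0 → deriv mu s = (fun t => Real.tan θ * τ t) s * mu s := by
    intro s hs
    have h1 := eqB s hs
    simp only [Real.tan_eq_sin_div_cos]
    field_simp
    nlinarith [h1]
  have hhc : Continuous (fun t => Real.tan θ * τ t) := continuous_const.mul hτc
  have hsol := ode_solution mu (fun t => Real.tan θ * τ t) hmu hhc hode s₀
  refine ⟨mu s₀, fun s => ?_⟩
  have hmus : mu s = mu s₀ * Real.exp (Real.tan θ * ∫ t in s₀..s, τ t) := by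
    rw [← intervalIntegral.integral_const_mul]
    exact hsol s
  refine ⟨hmus, ?_⟩
  rw [← hmus]
  by_cases h0 : mu s = 0
  · have hall : mu = fun _ => (0:ℝ) :=
      funext fun u => ode_zero mu _ hmu hhc hode s u h0
    have hder : deriv mu s = 0 := by rw [hall]; simp
    have hA := eqA s
    rw [hder, h0] at hA
    simp only [mul_zero, zero_mul, add_zero, zero_add] at hA
    rw [h0, mul_zero]
    rcases mul_eq_zero.mp hA with h | h
    · exact absurd h (hκ s).ne'
    · exact h
  · have hBe := eqB s h0
    have hAe := eqA s
    have hsc : Real.sin θ ^ 2 + Real.cos θ ^ 2 = 1 := Real.sin_sq_add_cos_sq θ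
    have key : Real.cos θ * (κ s * lam s) + τ s * mu s = 0 := by
      linear_combination Real.cos θ * hAe - Real.sin θ * hBe - (τ s * mu s) * hsc
    have hκs : κ s ≠ 0 := (hκ s).ne'
    field_simp
    linear_combination key
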